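/- Let S ⊂ ℝ² be compact, I ⊂ S a unisolvent finite set of n points for P_m, Λ the norming constant, and R the least-squares reconstruction operator. Then for every continuous g on S, ‖g − R g‖_{L∞(S)} ≤ (1 + Λ√n) · inf_{p∈P_m} ‖g − p‖_{L∞(S)} (quasi-optimal approximation). -/

import Mathlib

/-! Let `p` be the least-squares polynomial and `q` any polynomial of degree `≤ m`, and put
`M = ‖g - q‖_{L∞(S)}`. Minimality of `p` makes the residual `g - p` orthogonal on `I` to all of
`P_m`, in particular to `p - q`, so by Pythagoras `∑_I (p - q)² ≤ ∑_I (g - q)² ≤ n M²` and hence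
`|p - q| ≤ √n M` on `I`. The norming inequality lifts this to `|p - q| ≤ Λ √n M` on `S`, and the
triangle inequality `|g - p| ≤ |g - q| + |q - p|` concludes. -/

open Metric Set

noncomputable def supNorm (g : EuclideanSpace ℝ (Fin 2) → ℝ)
    (S : Set (EuclideanSpace ℝ (Fin 2))) : ℝ :=
  sSup ((fun x => |g x|) '' S)

noncomputable def pEval (p : MvPolynomial (Fin 2) ℝ) (x : EuclideanSpace ℝ (Fin 2)) : ℝ :=
  MvPolynomial.eval (fun i => x i) p

noncomputable def lsq (I : Finset (EuclideanSpace ℝ (Fin 2)))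
    (g : EuclideanSpace ℝ (Fin 2) → ℝ) (p : MvPolynomial (Fin 2) ℝ) : ℝ :=
  ∑ x ∈ I, (g x - pEval p x) ^ 2

namespace Finset

variable {ι : Type*} (s : Finset ι) (u v : ι → ℝ)

theorem sum_mul_eq_zero_of_forall_sum_sq_le
    (h : ∀ t : ℝ, ∑ i ∈ s, u i ^ 2 ≤ ∑ i ∈ s, (u i + t * v i) ^ 2) :
    ∑ i ∈ s, u i * v i = 0 := by
  have hquad : ∀ t : ℝ,
      0 ≤ (∑ i ∈ s, v i ^ 2) * (t * t) + 2 * (∑ i ∈ s, u i * v i) * t + 0 := by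
    intro t
    have hexpand : ∑ i ∈ s, (u i + t * v i) ^ 2 = ∑ i ∈ s, u i ^ 2 +
        ((∑ i ∈ s, v i ^ 2) * (t * t) + 2 * (∑ i ∈ s, u i * v i) * t + 0) := by
      simp only [add_zero, sum_mul, mul_sum, ← sum_add_distrib]
      exact sum_congr rfl fun i _ => by ring
    linarith [h t]
  have hdiscr := discrim_le_zero hquad
  rw [discrim, mul_zero, sub_zero, mul_pow] at hdiscr
  nlinarith [sq_nonneg (∑ i ∈ s, u i * v i)]

theorem sum_sq_le_sum_add_sq_of_sum_mul_eq_zero (h : ∑ i ∈ s, u i * v i = 0) :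
    ∑ i ∈ s, v i ^ 2 ≤ ∑ i ∈ s, (u i + v i) ^ 2 := by
  have hexpand : ∑ i ∈ s, (u i + v i) ^ 2 =
      ∑ i ∈ s, u i ^ 2 + 2 * ∑ i ∈ s, u i * v i + ∑ i ∈ s, v i ^ 2 := by
    simp only [mul_sum, ← sum_add_distrib]
    exact sum_congr rfl fun i _ => by ring
  have hu : 0 ≤ ∑ i ∈ s, u i ^ 2 := sum_nonneg fun i _ => sq_nonneg (u i)
  rw [hexpand, h]
  linarith

theorem sum_sq_le_card_mul_sq {M : ℝ} (h : ∀ i ∈ s, |v i| ≤ M) :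
    ∑ i ∈ s, v i ^ 2 ≤ s.card * M ^ 2 := by
  calc ∑ i ∈ s, v i ^ 2 ≤ ∑ _i ∈ s, M ^ 2 := sum_le_sum fun i hi => by
        rw [← sq_abs]
        exact pow_le_pow_left₀ (abs_nonneg _) (h i hi) 2
    _ = s.card * M ^ 2 := by rw [sum_const, nsmul_eq_mul]

theorem abs_le_sqrt_card_mul {M : ℝ} (hM : 0 ≤ M) (h : ∑ i ∈ s, v i ^ 2 ≤ s.card * M ^ 2)
    {i : ι} (hi : i ∈ s) : |v i| ≤ √s.card * M := by
  rw [← Real.sqrt_sq hM, ← Real.sqrt_mul (Nat.cast_nonneg _)]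
  exact Real.abs_le_sqrt ((single_le_sum (fun j _ => sq_nonneg (v j)) hi).trans h)

end Finset

section SupNorm

variable {f : EuclideanSpace ℝ (Fin 2) → ℝ} {S : Set (EuclideanSpace ℝ (Fin 2))}

theorem abs_le_supNorm (hS : IsCompact S) (hf : ContinuousOn f S) {x} (hx : x ∈ S) :
    |f x| ≤ supNorm f S :=
  le_csSup (hS.bddAbove_image hf.abs) ⟨x, hx, rfl⟩

theorem supNorm_le (hS : S.Nonempty) {C : ℝ} (h : ∀ x ∈ S, |f x| ≤ C) : supNorm f S ≤ C :=
  csSup_le (hS.image _) (by rintro _ ⟨x, hx, rfl⟩; exact h x hx)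

theorem supNorm_const (hS : S.Nonempty) (c : ℝ) : supNorm (fun _ => c) S = |c| := by
  rw [supNorm, hS.image_const, csSup_singleton]

end SupNorm

section Polynomial

variable {I : Finset (EuclideanSpace ℝ (Fin 2))} {g : EuclideanSpace ℝ (Fin 2) → ℝ} {m : ℕ}
  {p q r : MvPolynomial (Fin 2) ℝ}

theorem continuous_pEval (p : MvPolynomial (Fin 2) ℝ) : Continuous (pEval p) :=
  (MvPolynomial.continuous_eval p).comp
    (continuous_pi fun i => (EuclideanSpace.proj i : EuclideanSpace ℝ (Fin 2) →L[ℝ] ℝ).continuous)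

@[simp]
theorem pEval_one (x : EuclideanSpace ℝ (Fin 2)) : pEval 1 x = 1 := by
  simp [pEval]

@[simp]
theorem pEval_sub (x : EuclideanSpace ℝ (Fin 2)) : pEval (p - q) x = pEval p x - pEval q x := by
  simp [pEval]

@[simp]
theorem pEval_smul (t : ℝ) (x : EuclideanSpace ℝ (Fin 2)) : pEval (t • p) x = t * pEval p x := by
  simp [pEval]

variable (hp : p.totalDegree ≤ m) (hmin : ∀ q : MvPolynomial (Fin 2) ℝ, q.totalDegree ≤ m →
  lsq I g p ≤ lsq I g q)
include hp hmin

theorem lsq_residual_orthogonal (hr : r.totalDegree ≤ m) :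
    ∑ x ∈ I, (g x - pEval p x) * pEval r x = 0 := by
  refine Finset.sum_mul_eq_zero_of_forall_sum_sq_le _ _ _ fun t => ?_
  have hdeg : (p - t • r).totalDegree ≤ m :=
    (MvPolynomial.totalDegree_sub _ _).trans
      (max_le hp ((MvPolynomial.totalDegree_smul_le _ _).trans hr))
  convert hmin _ hdeg using 1
  rw [lsq]
  exact Finset.sum_congr rfl fun x _ => by simp only [pEval_sub, pEval_smul]; ring

theorem sum_sq_pEval_sub_le_lsq (hq : q.totalDegree ≤ m) :
    ∑ x ∈ I, pEval (p - q) x ^ 2 ≤ lsq I g q := by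
  have hdeg : (p - q).totalDegree ≤ m := (MvPolynomial.totalDegree_sub _ _).trans (max_le hp hq)
  convert Finset.sum_sq_le_sum_add_sq_of_sum_mul_eq_zero _ _ _
    (lsq_residual_orthogonal hp hmin hdeg) using 1
  exact Finset.sum_congr rfl fun x _ => by simp only [pEval_sub]; ring

end Polynomial

theorem stmt10_general
    (S : Set (EuclideanSpace ℝ (Fin 2))) (hS : IsCompact S)
    (I : Finset (EuclideanSpace ℝ (Fin 2))) (hI : I.Nonempty) (hIS : ↑I ⊆ S) (m : ℕ)
    (Λ : ℝ)
    (hΛ : ∀ p : MvPolynomial (Fin 2) ℝ, p.totalDegree ≤ m →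
      supNorm (pEval p) S ≤ Λ * I.sup' hI (fun x => |pEval p x|))
    (g : EuclideanSpace ℝ (Fin 2) → ℝ) (hg : ContinuousOn g S)
    (p : MvPolynomial (Fin 2) ℝ) (hp : p.totalDegree ≤ m)
    (hmin : ∀ q : MvPolynomial (Fin 2) ℝ, q.totalDegree ≤ m → lsq I g p ≤ lsq I g q) :
    ∀ q : MvPolynomial (Fin 2) ℝ, q.totalDegree ≤ m →
      supNorm (fun x => g x - pEval p x) S ≤
        (1 + Λ * Real.sqrt I.card) * supNorm (fun x => g x - pEval q x) S := by
  intro q hq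
  have hSne : S.Nonempty := hI.to_set.mono hIS
  set M := supNorm (fun x => g x - pEval q x) S
  have hgq : ∀ x ∈ S, |g x - pEval q x| ≤ M :=
    fun x hx => abs_le_supNorm hS (hg.sub (continuous_pEval q).continuousOn) hx
  have hM : 0 ≤ M := (abs_nonneg _).trans (hgq _ (hIS hI.choose_spec))
  have hΛ0 : 0 ≤ Λ := by
    have hone : pEval 1 = fun _ => 1 := funext pEval_one
    exact zero_le_one.trans (by simpa [hone, supNorm_const hSne] using hΛ 1 (by simp))
  have hpq_I : I.sup' hI (fun x => |pEval (p - q) x|) ≤ √I.card * M :=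
    Finset.sup'_le _ _ fun x hx => Finset.abs_le_sqrt_card_mul _ _ hM
      ((sum_sq_pEval_sub_le_lsq hp hmin hq).trans
        (Finset.sum_sq_le_card_mul_sq _ _ fun y hy => hgq y (hIS hy))) hx
  have hpq_S : supNorm (pEval (p - q)) S ≤ Λ * (√I.card * M) :=
    (hΛ _ ((MvPolynomial.totalDegree_sub _ _).trans (max_le hp hq))).trans
      (mul_le_mul_of_nonneg_left hpq_I hΛ0)
  refine supNorm_le hSne fun x hx => ?_
  have htriangle := abs_sub_le (g x) (pEval q x) (pEval p x)
  have hqp : |pEval q x - pEval p x| ≤ supNorm (pEval (p - q)) S := by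
    rw [abs_sub_comm, ← pEval_sub]
    exact abs_le_supNorm hS (continuous_pEval _).continuousOn hx
  linarith [hgq x hx]

/-- Quasi-optimal L∞ approximation of the least-squares reconstruction:
‖g − R g‖_{L∞(S)} ≤ (1 + Λ√n)·inf_{q∈P_m}‖g − q‖_{L∞(S)}. -/
theorem stmt10
    (S : Set (EuclideanSpace ℝ (Fin 2))) (hS : IsCompact S)
    (I : Finset (EuclideanSpace ℝ (Fin 2))) (hI : I.Nonempty) (hIS : ↑I ⊆ S) (m : ℕ)
    (huni : ∀ p : MvPolynomial (Fin 2) ℝ, p.totalDegree ≤ m →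
      (∀ y ∈ I, pEval p y = 0) → ∀ x ∈ S, pEval p x = 0)
    (Λ : ℝ)
    (hΛ : ∀ p : MvPolynomial (Fin 2) ℝ, p.totalDegree ≤ m →
      supNorm (pEval p) S ≤ Λ * I.sup' hI (fun x => |pEval p x|))
    (g : EuclideanSpace ℝ (Fin 2) → ℝ) (hg : ContinuousOn g S)
    (p : MvPolynomial (Fin 2) ℝ) (hp : p.totalDegree ≤ m)
    (hmin : ∀ q : MvPolynomial (Fin 2) ℝ, q.totalDegree ≤ m → lsq I g p ≤ lsq I g q) :
    ∀ q : MvPolynomial (Fin 2) ℝ, q.totalDegree ≤ m →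
      supNorm (fun x => g x - pEval p x) S ≤
        (1 + Λ * Real.sqrt I.card) * supNorm (fun x => g x - pEval q x) S :=
  stmt10_general S hS I hI hIS m Λ hΛ g hg p hp hmin
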